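/- Let x and y be real numbers with x + y + k ≠ 0 for every natural number k, and define t(x,y) = ∑_{n=0}^∞ (−1)^n (x)_n (x)_{n+1} / ((x+y)_n (x+y)_{n+1}), assumed to converge (be summable) both at (x,y) and at (x,y+2). Then t(x,y) = x(2x² + 6xy + 5y² + 2x + 4y) / (4(x+y)²(x+y+1)) − y²(y+1)(y+2) / (4(x+y)²(x+y+1)²) · t(x,y+2). -/

import Mathlib

open Filter Topology

/-- The rising factorial (Pochhammer symbol) `(a)_n = a (a+1) ⋯ (a+n-1)`. -/
noncomputable def poch (a : ℝ) (n : ℕ) : ℝ := ∏ i ∈ Finset.range n, (a + i)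

/-- `t(x,y) = ∑_{n=0}^∞ (−1)ⁿ (x)_n (x)_{n+1} / ((x+y)_n (x+y)_{n+1})`. -/
noncomputable def t (x y : ℝ) : ℝ :=
  ∑' n : ℕ, (-1 : ℝ) ^ n * poch x n * poch x (n + 1)
    / (poch (x + y) n * poch (x + y) (n + 1))

lemma poch_succ (a : ℝ) (n : ℕ) : poch a (n + 1) = poch a n * (a + n) :=
  Finset.prod_range_succ _ _

lemma poch_ne_zero (a : ℝ) (h : ∀ k : ℕ, a + k ≠ 0) (n : ℕ) : poch a n ≠ 0 :=
  Finset.prod_ne_zero_iff.2 fun i _ => h i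

lemma poch_add_two (a : ℝ) (n : ℕ) :
    poch a (n + 2) = a * (a + 1) * poch (a + 2) n := by
  induction n with
  | zero => simp [poch, Finset.prod_range_succ]
  | succ n ih =>
      have e : poch a (n + 1 + 2) = poch a (n + 2) * (a + ((n + 2 : ℕ) : ℝ)) := by
        rw [show n + 1 + 2 = (n + 2) + 1 by omega]; exact poch_succ a (n + 2)
      rw [e, ih, poch_succ]
      push_cast
      ring

/-- The telescoping certificate polynomial. -/
noncomputable def ppr (x y v : ℝ) : ℝ :=
  (2 * v ^ 4 + (8 * x + 10 * y + 8) * v ^ 3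
    + (12 * x ^ 2 + 30 * x * y + 19 * y ^ 2 + 24 * x + 32 * y + 10) * v ^ 2
    + (8 * x ^ 3 + 30 * x ^ 2 * y + 38 * x * y ^ 2 + 16 * y ^ 3 + 24 * x ^ 2
        + 64 * x * y + 43 * y ^ 2 + 20 * x + 30 * y + 4) * v
    + (2 * x ^ 4 + 10 * x ^ 3 * y + 19 * x ^ 2 * y ^ 2 + 16 * x * y ^ 3 + 5 * y ^ 4
        + 8 * x ^ 3 + 32 * x ^ 2 * y + 43 * x * y ^ 2 + 19 * y ^ 3 + 10 * x ^ 2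
        + 30 * x * y + 22 * y ^ 2 + 4 * x + 8 * y)) / 4

lemma key (x y v : ℝ) :
    (x + y + v + 2) * (x + y + v + 3)
        * (4 * (x + y + v) * (x + y + v + 1) ^ 2 * (x + y + v + 2)
            + y ^ 2 * (y + 1) * (y + 2))
      = 4 * ppr x y v * (x + y + v + 2) * (x + y + v + 3)
        + 4 * (x + v) * (x + v + 1) * ppr x y (v + 1) := by
  simp only [ppr]
  ring

lemma reduced (a b D P Q : ℝ) (h0 : b ≠ 0) (h1 : b + 1 ≠ 0)
    (h2 : b + 2 ≠ 0) (h3 : b + 3 ≠ 0)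
    (k : (b + 2) * (b + 3) * (4 * b * (b + 1) ^ 2 * (b + 2) + D)
      = 4 * P * (b + 2) * (b + 3) + 4 * a * (a + 1) * Q) :
    1 / b + D / (4 * b ^ 2 * (b + 1) ^ 2 * (b + 2))
    = P / (b ^ 2 * (b + 1) ^ 2 * (b + 2))
      + a * (a + 1) * Q / (b ^ 2 * (b + 1) ^ 2 * (b + 2) ^ 2 * (b + 3)) := by
  have hd2 : 4 * b ^ 2 * (b + 1) ^ 2 * (b + 2) ≠ 0 := by positivity
  have hr1 : b ^ 2 * (b + 1) ^ 2 * (b + 2) ≠ 0 := by positivity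
  have hr2 : b ^ 2 * (b + 1) ^ 2 * (b + 2) ^ 2 * (b + 3) ≠ 0 := by positivity
  rw [div_add_div _ _ h0 hd2, div_add_div _ _ hr1 hr2,
    div_eq_div_iff (mul_ne_zero h0 hd2) (mul_ne_zero hr1 hr2)]
  linear_combination (b ^ 5 * (b + 1) ^ 4 * (b + 2) ^ 2) * k

set_option maxHeartbeats 2000000 in
/-- Purely algebraic core of the telescoping step, with all Pochhammer values
abstracted into opaque variables. -/
lemma abstract_step (E P S a b u v D Pp Qp : ℝ) (hS : S ≠ 0) (hb : b ≠ 0)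
    (hb1 : b + 1 ≠ 0) (hb2 : b + 2 ≠ 0) (hb3 : b + 3 ≠ 0) (hu : u ≠ 0) (hv : v ≠ 0)
    (k : (b + 2) * (b + 3) * (4 * b * (b + 1) ^ 2 * (b + 2) + D)
      = 4 * Pp * (b + 2) * (b + 3) + 4 * a * (a + 1) * Qp) :
    E * P * (P * a) / (S * (S * b))
      + D / (4 * u ^ 2 * v ^ 2)
        * (E * P * (P * a)
            / ((S * b * (b + 1) / (u * v)) * (S * b * (b + 1) * (b + 2) / (u * v))))
    = E * P * (P * a) / (S * (S * b)) * (Pp / (b * (b + 1) ^ 2 * (b + 2)))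
      - E * -1 * (P * a) * (P * a * (a + 1)) / ((S * b) * (S * b * (b + 1)))
          * (Qp / ((b + 1) * (b + 1 + 1) ^ 2 * (b + 1 + 2))) := by
  have red := reduced a b D Pp Qp hb hb1 hb2 hb3 k
  have gL : E * P * (P * a) / (S * (S * b))
      + D / (4 * u ^ 2 * v ^ 2)
        * (E * P * (P * a)
            / ((S * b * (b + 1) / (u * v)) * (S * b * (b + 1) * (b + 2) / (u * v))))
      = (E * P ^ 2 * a / S ^ 2)
          * (1 / b + D / (4 * b ^ 2 * (b + 1) ^ 2 * (b + 2))) := by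
    field_simp
  have gR : E * P * (P * a) / (S * (S * b)) * (Pp / (b * (b + 1) ^ 2 * (b + 2)))
      - E * -1 * (P * a) * (P * a * (a + 1)) / ((S * b) * (S * b * (b + 1)))
          * (Qp / ((b + 1) * (b + 1 + 1) ^ 2 * (b + 1 + 2)))
      = (E * P ^ 2 * a / S ^ 2)
          * (Pp / (b ^ 2 * (b + 1) ^ 2 * (b + 2))
            + a * (a + 1) * Qp
              / (b ^ 2 * (b + 1) ^ 2 * (b + 2) ^ 2 * (b + 3))) := by
    have e1 : b + 1 + 1 = b + 2 := by ring
    have e2 : b + 1 + 2 = b + 3 := by ring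
    rw [e1, e2]
    field_simp
    ring
  rw [gL, gR, red]

/-- The telescoping sequence: the general term of `t x y` times a rational function. -/
noncomputable def hh (x y : ℝ) (n : ℕ) : ℝ :=
  ((-1) ^ n * poch x n * poch x (n + 1) / (poch (x + y) n * poch (x + y) (n + 1)))
    * (ppr x y n / ((x + y + n) * (x + y + n + 1) ^ 2 * (x + y + n + 2)))

lemma step (x y : ℝ) (hxy : ∀ k : ℕ, x + y + k ≠ 0) (n : ℕ) :
    (-1 : ℝ) ^ n * poch x n * poch x (n + 1)
        / (poch (x + y) n * poch (x + y) (n + 1))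
      + y ^ 2 * (y + 1) * (y + 2) / (4 * (x + y) ^ 2 * (x + y + 1) ^ 2)
        * ((-1 : ℝ) ^ n * poch x n * poch x (n + 1)
            / (poch (x + (y + 2)) n * poch (x + (y + 2)) (n + 1)))
      = hh x y n - hh x y (n + 1) := by
  have hs : ∀ k : ℕ, x + y + (k : ℝ) ≠ 0 := hxy
  have hSn : poch (x + y) n ≠ 0 := poch_ne_zero _ hs n
  have e0 : x + y ≠ 0 := by simpa using hs 0
  have e1 : x + y + 1 ≠ 0 := by simpa using hs 1
  have f : ∀ k : ℕ, x + y + (n : ℝ) + k ≠ 0 := fun k h =>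
    hs (n + k) (by push_cast; linarith)
  have f0 : x + y + (n : ℝ) ≠ 0 := by simpa using f 0
  have f1 : x + y + (n : ℝ) + 1 ≠ 0 := by simpa using f 1
  have f2 : x + y + (n : ℝ) + 2 ≠ 0 := by have := f 2; push_cast at this; simpa using this
  have f3 : x + y + (n : ℝ) + 3 ≠ 0 := by have := f 3; push_cast at this; simpa using this
  have hxy2 : x + (y + 2) = (x + y) + 2 := by ring
  have eB : ∀ m : ℕ, poch (x + (y + 2)) m = poch ((x + y) + 2) m := by
    intro m; rw [hxy2]
  have q1 : poch (x + y) (n + 1) = poch (x + y) n * (x + y + n) := poch_succ _ _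
  have q2 : poch (x + y) (n + 2) = poch (x + y) n * (x + y + n) * (x + y + n + 1) := by
    rw [show n + 2 = (n + 1) + 1 from rfl, poch_succ, q1]; push_cast; ring
  have q3 : poch (x + y) (n + 3)
      = poch (x + y) n * (x + y + n) * (x + y + n + 1) * (x + y + n + 2) := by
    rw [show n + 3 = (n + 2) + 1 from rfl, poch_succ, q2]; push_cast; ring
  have r1 : poch x (n + 1) = poch x n * (x + n) := poch_succ _ _
  have r2 : poch x (n + 2) = poch x n * (x + n) * (x + n + 1) := by
    rw [show n + 2 = (n + 1) + 1 from rfl, poch_succ, r1]; push_cast; ring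
  have b1 : poch ((x + y) + 2) n
      = poch (x + y) n * (x + y + n) * (x + y + n + 1) / ((x + y) * (x + y + 1)) := by
    have h := poch_add_two (x + y) n
    rw [q2] at h
    rw [eq_div_iff (mul_ne_zero e0 e1)]
    linarith [h]
  have b2 : poch ((x + y) + 2) (n + 1)
      = poch (x + y) n * (x + y + n) * (x + y + n + 1) * (x + y + n + 2)
          / ((x + y) * (x + y + 1)) := by
    have h := poch_add_two (x + y) (n + 1)
    simp only [show n + 1 + 2 = n + 3 from rfl] at h
    rw [q3] at h
    rw [eq_div_iff (mul_ne_zero e0 e1)]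
    linarith [h]
  have c1 : ((n + 1 : ℕ) : ℝ) = (n : ℝ) + 1 := by push_cast; ring
  have c2 : x + y + ((n : ℝ) + 1) = x + y + (n : ℝ) + 1 := by ring
  have pw : (-1 : ℝ) ^ (n + 1) = (-1) ^ n * -1 := pow_succ _ _
  rw [hh, hh]
  simp only [show n + 1 + 1 = n + 2 from rfl]
  rw [c1, c2, pw, eB, eB, b1, b2, q1, q2, r1, r2]
  exact abstract_step ((-1 : ℝ) ^ n) (poch x n) (poch (x + y) n) (x + (n : ℝ))
    (x + y + (n : ℝ)) (x + y) (x + y + 1) (y ^ 2 * (y + 1) * (y + 2))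
    (ppr x y n) (ppr x y ((n : ℝ) + 1)) hSn f0 f1 f2 f3 e0 e1 (key x y n)

/-- The ₃F₂(−1) recurrence of Theorem 3. -/
theorem stmt_9 (x y : ℝ) (hxy : ∀ k : ℕ, x + y + k ≠ 0)
    (hA : Summable fun n : ℕ => (-1 : ℝ) ^ n * poch x n * poch x (n + 1)
      / (poch (x + y) n * poch (x + y) (n + 1)))
    (hB : Summable fun n : ℕ => (-1 : ℝ) ^ n * poch x n * poch x (n + 1)
      / (poch (x + (y + 2)) n * poch (x + (y + 2)) (n + 1))) :
    t x y = x * (2 * x ^ 2 + 6 * x * y + 5 * y ^ 2 + 2 * x + 4 * y)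
        / (4 * (x + y) ^ 2 * (x + y + 1))
      - y ^ 2 * (y + 1) * (y + 2) / (4 * (x + y) ^ 2 * (x + y + 1) ^ 2)
        * t x (y + 2) := by
  classical
  have hs : ∀ k : ℕ, x + y + (k : ℝ) ≠ 0 := hxy
  have e0 : x + y ≠ 0 := by simpa using hs 0
  have e1 : x + y + 1 ≠ 0 := by simpa using hs 1
  have e2 : x + y + 2 ≠ 0 := by have := hs 2; push_cast at this; simpa using this
  set A : ℕ → ℝ := fun n : ℕ => (-1 : ℝ) ^ n * poch x n * poch x (n + 1)
      / (poch (x + y) n * poch (x + y) (n + 1)) with hAdef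
  set B : ℕ → ℝ := fun n : ℕ => (-1 : ℝ) ^ n * poch x n * poch x (n + 1)
      / (poch (x + (y + 2)) n * poch (x + (y + 2)) (n + 1)) with hBdef
  set C : ℝ := y ^ 2 * (y + 1) * (y + 2) / (4 * (x + y) ^ 2 * (x + y + 1) ^ 2) with hCdef
  have hv : Summable (fun n : ℕ => A n + C * B n) := hA.add (hB.mul_left C)
  -- partial sums telescope
  have hpart : ∀ N : ℕ, ∑ i ∈ Finset.range N, (A i + C * B i) = hh x y 0 - hh x y N := by
    intro N
    have hcg : ∀ i ∈ Finset.range N, A i + C * B i = hh x y i - hh x y (i + 1) :=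
      fun i _ => step x y hxy i
    rw [Finset.sum_congr rfl hcg, Finset.sum_range_sub' (hh x y) N]
  -- the tail of the telescoping sequence tends to zero
  have hA0 : Filter.Tendsto A Filter.atTop (nhds 0) := hA.tendsto_atTop_zero
  have hu : Filter.Tendsto (fun n : ℕ => 1 / (n : ℝ)) Filter.atTop (nhds 0) :=
    tendsto_one_div_atTop_nhds_zero_nat
  -- numerator and denominator of the rational factor, as functions of 1/n
  set Nu : ℝ → ℝ := fun u => 2 + (8 * x + 10 * y + 8) * u
      + (12 * x ^ 2 + 30 * x * y + 19 * y ^ 2 + 24 * x + 32 * y + 10) * u ^ 2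
      + (8 * x ^ 3 + 30 * x ^ 2 * y + 38 * x * y ^ 2 + 16 * y ^ 3 + 24 * x ^ 2
          + 64 * x * y + 43 * y ^ 2 + 20 * x + 30 * y + 4) * u ^ 3
      + (2 * x ^ 4 + 10 * x ^ 3 * y + 19 * x ^ 2 * y ^ 2 + 16 * x * y ^ 3 + 5 * y ^ 4
          + 8 * x ^ 3 + 32 * x ^ 2 * y + 43 * x * y ^ 2 + 19 * y ^ 3 + 10 * x ^ 2
          + 30 * x * y + 22 * y ^ 2 + 4 * x + 8 * y) * u ^ 4 with hNu
  set De : ℝ → ℝ := fun u => 4 * (1 + (x + y) * u) * (1 + (x + y + 1) * u) ^ 2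
      * (1 + (x + y + 2) * u) with hDe
  have hNuc : Continuous Nu := by rw [hNu]; fun_prop
  have hDec : Continuous De := by rw [hDe]; fun_prop
  have hNu0 : Nu 0 = 2 := by rw [hNu]; norm_num
  have hDe0 : De 0 = 4 := by rw [hDe]; norm_num
  have hNulim : Filter.Tendsto (fun n : ℕ => Nu (1 / n)) Filter.atTop (nhds 2) := by
    have := (hNuc.tendsto 0).comp hu
    rwa [hNu0] at this
  have hDelim : Filter.Tendsto (fun n : ℕ => De (1 / n)) Filter.atTop (nhds 4) := by
    have := (hDec.tendsto 0).comp hu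
    rwa [hDe0] at this
  have hratio : Filter.Tendsto (fun n : ℕ => Nu (1 / n) / De (1 / n))
      Filter.atTop (nhds (1 / 2)) := by
    have h := hNulim.div hDelim (show (4 : ℝ) ≠ 0 by norm_num)
    have e : (2 : ℝ) / 4 = 1 / 2 := by norm_num
    rw [e] at h
    exact h
  -- eventual identification of hh with A * (Nu/De)
  have hev : ∀ n : ℕ, 1 ≤ n → hh x y n = A n * (Nu (1 / n) / De (1 / n)) := by
    intro n hn
    have hn0 : (n : ℝ) ≠ 0 := Nat.cast_ne_zero.2 (by omega)
    have f : ∀ k : ℕ, x + y + (n : ℝ) + k ≠ 0 := fun k h =>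
      hs (n + k) (by push_cast; linarith)
    have f0 : x + y + (n : ℝ) ≠ 0 := by simpa using f 0
    have f1 : x + y + (n : ℝ) + 1 ≠ 0 := by simpa using f 1
    have f2 : x + y + (n : ℝ) + 2 ≠ 0 := by have := f 2; push_cast at this; simpa using this
    have hD : (x + y + (n : ℝ)) * (x + y + (n : ℝ) + 1) ^ 2 * (x + y + (n : ℝ) + 2) ≠ 0 :=
      mul_ne_zero (mul_ne_zero f0 (pow_ne_zero _ f1)) f2
    have g0 : 1 + (x + y) * (1 / (n : ℝ)) ≠ 0 := by
      have : 1 + (x + y) * (1 / (n : ℝ)) = (x + y + (n : ℝ)) / (n : ℝ) := by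
        field_simp; ring
      rw [this]; exact div_ne_zero f0 hn0
    have g1 : 1 + (x + y + 1) * (1 / (n : ℝ)) ≠ 0 := by
      have : 1 + (x + y + 1) * (1 / (n : ℝ)) = (x + y + (n : ℝ) + 1) / (n : ℝ) := by
        field_simp; ring
      rw [this]; exact div_ne_zero f1 hn0
    have g2 : 1 + (x + y + 2) * (1 / (n : ℝ)) ≠ 0 := by
      have : 1 + (x + y + 2) * (1 / (n : ℝ)) = (x + y + (n : ℝ) + 2) / (n : ℝ) := by
        field_simp; ring
      rw [this]; exact div_ne_zero f2 hn0
    have hDe' : De (1 / (n : ℝ)) ≠ 0 := by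
      rw [hDe]
      exact mul_ne_zero (mul_ne_zero (mul_ne_zero (by norm_num) g0) (pow_ne_zero _ g1)) g2
    have hquot : ppr x y n
        / ((x + y + (n : ℝ)) * (x + y + (n : ℝ) + 1) ^ 2 * (x + y + (n : ℝ) + 2))
        = Nu (1 / n) / De (1 / n) := by
      rw [div_eq_div_iff hD hDe', hNu, hDe]
      simp only [ppr]
      field_simp
      ring
    rw [hh, hAdef, hquot]
  have hhev : (fun n : ℕ => hh x y n)
      =ᶠ[Filter.atTop] fun n : ℕ => A n * (Nu (1 / n) / De (1 / n)) := by
    filter_upwards [Filter.eventually_ge_atTop 1] with n hn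
    exact hev n hn
  have hh0 : Filter.Tendsto (fun n : ℕ => hh x y n) Filter.atTop (nhds 0) := by
    have h1 : Filter.Tendsto (fun n : ℕ => A n * (Nu (1 / n) / De (1 / n)))
        Filter.atTop (nhds (0 * (1 / 2))) := hA0.mul hratio
    have h2 := h1.congr' hhev.symm
    norm_num at h2
    exact h2
  -- identify the sum
  have hts1 : Filter.Tendsto (fun N : ℕ => ∑ i ∈ Finset.range N, (A i + C * B i))
      Filter.atTop (nhds (∑' n : ℕ, (A n + C * B n))) := hv.hasSum.tendsto_sum_nat
  have hts2 : Filter.Tendsto (fun N : ℕ => ∑ i ∈ Finset.range N, (A i + C * B i))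
      Filter.atTop (nhds (hh x y 0)) := by
    simp only [hpart]
    simpa using tendsto_const_nhds.sub hh0
  have heq : ∑' n : ℕ, (A n + C * B n) = hh x y 0 := tendsto_nhds_unique hts1 hts2
  rw [Summable.tsum_add hA (hB.mul_left C), tsum_mul_left] at heq
  have ht1 : t x y = ∑' n : ℕ, A n := rfl
  have ht2 : t x (y + 2) = ∑' n : ℕ, B n := rfl
  have hP : hh x y 0 = x * (2 * x ^ 2 + 6 * x * y + 5 * y ^ 2 + 2 * x + 4 * y)
      / (4 * (x + y) ^ 2 * (x + y + 1)) := by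
    have p1 : poch x 0 = 1 := by simp [poch]
    have p2 : poch x 1 = x := by simp [poch]
    have p3 : poch (x + y) 0 = 1 := by simp [poch]
    have p4 : poch (x + y) 1 = x + y := by simp [poch]
    rw [hh]
    norm_num [p1, p2, p3, p4, ppr]
    field_simp
    ring
  rw [ht1, ht2, ← hP]
  linarith [heq]
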